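/- Let G be a minimal counterexample (fewest vertices, then most edges) among planar graphs of maximum degree Δ ≤ 6 with χ₂(G) > 21. Then G does not contain a vertex of degree 5 all of whose incident faces are triangles, nor a vertex of degree 4 incident to at least three triangular faces. -/

import Mathlib

open SimpleGraph

/-- The square of a graph `G`: two distinct vertices are adjacent iff they are at
distance at most 2 in `G`. -/
def SimpleGraph.square {V : Type*} (G : SimpleGraph V) : SimpleGraph V where
  Adj u v := u ≠ v ∧ (G.Adj u v ∨ ∃ w, G.Adj u w ∧ G.Adj w v)
  symm := ⟨fun u v ⟨h1, h2⟩ => ⟨h1.symm, h2.elim (fun h => Or.inl h.symm)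
    (fun ⟨w, h3, h4⟩ => Or.inr ⟨w, h4.symm, h3.symm⟩)⟩⟩
  loopless := ⟨fun _ h => h.1 rfl⟩

/-- The 2-chromatic number of a graph: the chromatic number of its square. -/
noncomputable def chi2 {V : Type*} (G : SimpleGraph V) : ℕ∞ :=
  G.square.chromaticNumber

/-- The degree of a vertex, as a cardinality (instance-free). -/
noncomputable def degN {V : Type*} (G : SimpleGraph V) (v : V) : ℕ :=
  Nat.card {u // G.Adj v u}

/-- `G` has maximum degree `Δ`. -/
def maxDegIs {V : Type*} (G : SimpleGraph V) (Δ : ℕ) : Prop :=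
  (∀ v, degN G v ≤ Δ) ∧ ∃ v, degN G v = Δ

/-- A graph is planar if it has a drawing in the plane: an injective placement of the
vertices and, for each edge, a simple arc joining the endpoints, such that arcs avoid
all vertex points and the interiors of arcs of distinct edges are disjoint. -/
def IsPlanar {V : Type*} (G : SimpleGraph V) : Prop :=
  ∃ (pos : V → ℝ × ℝ) (arc : V → V → ℝ → ℝ × ℝ),
    Function.Injective pos ∧
    (∀ u v, G.Adj u v →
      Continuous (arc u v) ∧ arc u v 0 = pos u ∧ arc u v 1 = pos v ∧
      Set.InjOn (arc u v) (Set.Icc 0 1) ∧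
      ∀ w, pos w ∉ arc u v '' Set.Ioo 0 1) ∧
    ∀ u v x y, G.Adj u v → G.Adj x y → s(u, v) ≠ s(x, y) →
      Disjoint (arc u v '' Set.Ioo 0 1) (arc x y '' Set.Ioo 0 1)

/-- `G` is a minimal counterexample (fewest vertices, then most edges) among planar
graphs of maximum degree at most `6` to the bound `χ₂ ≤ 21`. -/
def MinimalCex6 {V : Type*} [Fintype V] (G : SimpleGraph V) : Prop :=
  IsPlanar G ∧ (∀ v, degN G v ≤ 6) ∧ (21 : ℕ∞) < chi2 G ∧
  ∀ (n : ℕ) (H : SimpleGraph (Fin n)), IsPlanar H →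
    (∀ v, degN H v ≤ 6) →
    (n < Fintype.card V ∨
      (n = Fintype.card V ∧ Nat.card G.edgeSet < Nat.card H.edgeSet)) →
    chi2 H ≤ (21 : ℕ∞)

section Comb

variable {V : Type*} [Fintype V] [DecidableEq V] (G : SimpleGraph V) [DecidableRel G.Adj]

/-- The involution exchanging the two darts of each edge. -/
def dartSymmPerm : Equiv.Perm G.Dart :=
  ⟨SimpleGraph.Dart.symm, SimpleGraph.Dart.symm,
    fun d => d.symm_symm, fun d => d.symm_symm⟩

/-- A combinatorial plane embedding (rotation system) of `G`: a permutation of the darts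
whose cycles are exactly the sets of darts sharing a tail vertex. -/
structure PlaneEmbedding where
  rot : Equiv.Perm G.Dart
  same_vertex : ∀ d d' : G.Dart, rot.SameCycle d d' ↔ d.toProd.1 = d'.toProd.1

variable {G}

/-- The face-tracing permutation of an embedding. -/
def PlaneEmbedding.facePerm (e : PlaneEmbedding G) : Equiv.Perm G.Dart :=
  e.rot * dartSymmPerm G

/-- Darts lying on the same face. -/
def PlaneEmbedding.faceSetoid (e : PlaneEmbedding G) : Setoid G.Dart :=
  ⟨e.facePerm.SameCycle,
    ⟨fun _ => Equiv.Perm.SameCycle.refl _ _, fun h => h.symm, fun h h' => h.trans h'⟩⟩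

/-- The faces of an embedding: orbits of the face-tracing permutation on darts. -/
def PlaneEmbedding.Faces (e : PlaneEmbedding G) : Type _ := Quotient e.faceSetoid

/-- The degree of a face: the number of darts on it (so cut-edges count twice). -/
noncomputable def PlaneEmbedding.faceDeg (e : PlaneEmbedding G) (f : e.Faces) : ℕ :=
  Nat.card {d : G.Dart // Quotient.mk e.faceSetoid d = f}

/-- A vertex is incident to a face if some dart of the face has it as tail. -/
def PlaneEmbedding.VertexOnFace (e : PlaneEmbedding G) (v : V) (f : e.Faces) : Prop :=
  ∃ d : G.Dart, d.toProd.1 = v ∧ Quotient.mk e.faceSetoid d = f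

/-- A vertex is triangulated if all its incident faces are triangles. -/
def PlaneEmbedding.Triangulated (e : PlaneEmbedding G) (v : V) : Prop :=
  ∀ f : e.Faces, e.VertexOnFace v f → e.faceDeg f = 3

noncomputable instance (e : PlaneEmbedding G) : Fintype e.Faces :=
  @Fintype.ofFinite _ (Quotient.finite _)

/-- The embedding is on the sphere: Euler's formula holds. -/
def PlaneEmbedding.IsSphere (e : PlaneEmbedding G) : Prop :=
  (Fintype.card V : ℤ) - G.edgeFinset.card + Nat.card e.Faces = 2

end Comb

/-!
Let `v` be the vertex of either configuration. Delete `v`; in the degree-4 case also join the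
two ends `x₀`, `x₃` of the path of neighbours of `v` spanned by its three triangles, drawing the
new edge along `x₀ v x₃`. The result is a smaller planar graph of maximum degree at most 6, so its
square is 21-colourable by minimality. Consecutive neighbours of `v` in the rotation that bound a
triangle are adjacent, so the neighbours of `v` lie on a closed walk of length at most 5 of the
new graph; hence any two of them stay at distance at most 2 and the colouring is one of the
square of `G - v`. Finally every neighbour of `v` shares two (degree 5), resp. one (degree 4),
neighbours with `v`, so `v` sees at most `5 * 4 = 4 * 5 = 20` vertices at distance at most 2, and
a colour is left for `v`.
-/

open SimpleGraph Function Set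
open scoped Finset

theorem Equiv.Perm.isCycleOn_sameCycle {α : Type*} (f : Equiv.Perm α) (x : α) :
    f.IsCycleOn {y | f.SameCycle x y} :=
  ⟨f.bijOn fun _ => Equiv.Perm.sameCycle_apply_right, fun _ ha _ hb => ha.symm.trans hb⟩

namespace SimpleGraph

variable {V W : Type*} {G : SimpleGraph V}

def Hom.square {G' : SimpleGraph W} (f : G →g G') (hf : Injective f) :
    G.square →g G'.square where
  toFun := f
  map_rel' := by
    rintro u w ⟨hne, h | ⟨x, hux, hxw⟩⟩
    · exact ⟨hf.ne hne, Or.inl (f.map_adj h)⟩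
    · exact ⟨hf.ne hne, Or.inr ⟨f x, f.map_adj hux, f.map_adj hxw⟩⟩

theorem Colorable.of_induce_compl_singleton [Finite V] {v : V} {n : ℕ}
    (hG : (G.induce {v}ᶜ).Colorable n) (hv : Nat.card (G.neighborSet v) < n) :
    G.Colorable n := by
  classical
  obtain ⟨c⟩ := hG
  obtain ⟨a, ha⟩ : ∃ a : Fin n, ∀ u : G.neighborSet v, c ⟨u, (G.ne_of_adj u.2).symm⟩ ≠ a := by
    by_contra! h
    have := Nat.card_le_card_of_surjective _ h
    simp only [Nat.card_eq_fintype_card, Fintype.card_fin] at this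
    omega
  refine ⟨Coloring.mk (fun x => if hx : x = v then a else c ⟨x, hx⟩) fun {x y} hxy => ?_⟩
  by_cases hx : x = v <;> by_cases hy : y = v
  · exact absurd (hx.trans hy.symm) hxy.ne
  · subst hx
    simpa [hy] using (ha ⟨y, hxy⟩).symm
  · subst hy
    simpa [hx] using ha ⟨x, hxy.symm⟩
  · simpa [hx, hy] using c.valid (G := G.induce {v}ᶜ) (v := ⟨x, hx⟩) (w := ⟨y, hy⟩) hxy

theorem square_induce_le_of_neighbors {v : V} {H : SimpleGraph ({v}ᶜ : Set V)}
    (hGH : G.induce {v}ᶜ ≤ H)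
    (hN : ∀ x y : ({v}ᶜ : Set V), x ≠ y → G.Adj v x → G.Adj v y → H.square.Adj x y) :
    G.square.induce {v}ᶜ ≤ H.square := by
  rintro x y ⟨hne, h | ⟨w, hxw, hwy⟩⟩
  · exact ⟨fun h' => hne (congrArg Subtype.val h'), Or.inl (hGH h)⟩
  · by_cases hw : w = v
    · subst hw
      exact hN x y (fun h' => hne (congrArg Subtype.val h')) hxw.symm hwy
    · exact ⟨fun h' => hne (congrArg Subtype.val h'), Or.inr ⟨⟨w, hw⟩, hGH hxw, hGH hwy⟩⟩

theorem square_adj_of_periodic {c : ℕ → W} {H : SimpleGraph W} {n : ℕ} (hn₀ : 0 < n) (hn : n ≤ 5)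
    (hc : Periodic c n) (hadj : ∀ k < n, H.Adj (c k) (c (k + 1))) {i j : ℕ} (hij : c i ≠ c j) :
    H.square.Adj (c i) (c j) := by
  have hadj' : ∀ k, H.Adj (c k) (c (k + 1)) := fun k => by
    have h := hadj (k % n) (Nat.mod_lt _ hn₀)
    rwa [hc.map_mod_nat, ← (hc.nat_mul (k / n)) (k % n + 1), Nat.cast_id,
      show k % n + 1 + k / n * n = k + 1 by rw [add_right_comm, Nat.mod_add_div']] at h
  have step : ∀ k m, m ∈ Icc 1 2 → c k ≠ c (k + m) → H.square.Adj (c k) (c (k + m)) := by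
    rintro k m ⟨hm1, hm2⟩ hne
    obtain rfl | rfl : m = 1 ∨ m = 2 := by omega
    · exact ⟨hne, .inl (hadj' k)⟩
    · exact ⟨hne, .inr ⟨c (k + 1), hadj' k, hadj' (k + 1)⟩⟩
  rw [← hc.map_mod_nat i, ← hc.map_mod_nat j] at hij ⊢
  have hi := Nat.mod_lt i hn₀
  have hj := Nat.mod_lt j hn₀
  wlog hle : i % n ≤ j % n generalizing i j
  · exact (this hij.symm hj hi (by omega)).symm
  obtain ⟨m, hm⟩ := Nat.exists_eq_add_of_le hle
  have hm0 : m ≠ 0 := by rintro rfl; simp [hm] at hij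
  rw [hm] at hij ⊢
  -- one of the two arcs of the walk between the positions has length `m ≤ 2` or `n - m ≤ 2`
  by_cases hm2 : m ≤ 2
  · exact step _ _ ⟨by omega, hm2⟩ hij
  · have hwrap : c (i % n) = c (i % n + m + (n - m)) := by
      rw [show i % n + m + (n - m) = i % n + n by omega, hc]
    rw [hwrap] at hij ⊢
    exact (step _ _ ⟨by omega, by omega⟩ hij.symm).symm

theorem square_induce_le_of_periodic {v : V} {H : SimpleGraph ({v}ᶜ : Set V)}
    (hGH : G.induce {v}ᶜ ≤ H) {c : ℕ → ({v}ᶜ : Set V)} {n : ℕ} (hn₀ : 0 < n) (hn : n ≤ 5)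
    (hc : Periodic c n) (hadj : ∀ k < n, H.Adj (c k) (c (k + 1)))
    (hcN : ∀ x : ({v}ᶜ : Set V), G.Adj v x → ∃ k, c k = x) :
    G.square.induce {v}ᶜ ≤ H.square := by
  refine square_induce_le_of_neighbors hGH fun x y hxy hx hy => ?_
  obtain ⟨i, rfl⟩ := hcN x hx
  obtain ⟨j, rfl⟩ := hcN y hy
  exact square_adj_of_periodic hn₀ hn hc hadj hxy

section Finite

variable [Fintype V] [DecidableEq V] [DecidableRel G.Adj]

theorem square_neighborSet_subset (v : V) :
    G.square.neighborSet v ⊆ ↑((G.neighborFinset v).biUnion fun u =>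
      insert u (G.neighborFinset u \ insert v (G.neighborFinset v))) := by
  rintro y ⟨hvy, hy⟩
  simp only [Finset.coe_biUnion, Finset.mem_coe, mem_iUnion, exists_prop, mem_neighborFinset]
  by_cases hvy' : G.Adj v y
  · exact ⟨y, hvy', Finset.mem_insert_self _ _⟩
  · obtain ⟨u, hvu, huy⟩ := hy.resolve_left hvy'
    exact ⟨u, hvu, by simp [huy, hvy', hvy.symm]⟩

theorem card_insert_neighborFinset_sdiff_le {u v : V} {Δ m : ℕ} (huv : G.Adj v u)
    (hΔ : G.degree u ≤ Δ) (hm : m ≤ #(G.neighborFinset u ∩ G.neighborFinset v)) :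
    #(insert u (G.neighborFinset u \ insert v (G.neighborFinset v))) ≤ Δ - m := by
  set N := G.neighborFinset
  have hsub : insert v (N u ∩ N v) ⊆ N u ∩ insert v (N v) := by
    intro z
    simp only [Finset.mem_insert, Finset.mem_inter]
    rintro (rfl | ⟨hz, hz'⟩)
    · exact ⟨(G.mem_neighborFinset _ _).2 huv.symm, .inl rfl⟩
    · exact ⟨hz, .inr hz'⟩
  have h₁ := Finset.card_le_card hsub
  rw [Finset.card_insert_of_notMem (by simp [N])] at h₁
  have h₂ := Finset.card_sdiff_add_card_inter (N u) (insert v (N v))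
  have h₃ := Finset.card_insert_le u (N u \ insert v (N v))
  have h₄ : #(N u) = G.degree u := G.card_neighborFinset_eq_degree u
  omega

theorem card_square_neighborSet_le {v : V} {Δ m : ℕ} (hΔ : ∀ u, G.degree u ≤ Δ)
    (hm : ∀ u ∈ G.neighborFinset v, m ≤ #(G.neighborFinset u ∩ G.neighborFinset v)) :
    Nat.card (G.square.neighborSet v) ≤ G.degree v * (Δ - m) := by
  set N := G.neighborFinset
  calc Nat.card (G.square.neighborSet v)
      ≤ #((N v).biUnion fun u => insert u (N u \ insert v (N v))) :=
        (Nat.card_mono (Finset.finite_toSet _) (G.square_neighborSet_subset v)).trans_eq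
          (by rw [Nat.card_coe_set_eq, Set.ncard_coe_finset])
    _ ≤ ∑ u ∈ N v, #(insert u (N u \ insert v (N v))) := Finset.card_biUnion_le
    _ ≤ ∑ _ ∈ N v, (Δ - m) := Finset.sum_le_sum fun u hu =>
        card_insert_neighborFinset_sdiff_le ((G.mem_neighborFinset _ _).1 hu) (hΔ u) (hm u hu)
    _ = G.degree v * (Δ - m) := by simp [N]

end Finite

end SimpleGraph

section Degree

variable {V W : Type*} {G : SimpleGraph V}

theorem degN_eq_degree [Fintype V] [DecidableRel G.Adj] (v : V) : degN G v = G.degree v := by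
  rw [degN, ← card_neighborSet_eq_degree, ← Nat.card_eq_fintype_card]
  rfl

theorem degN_comap_le [Finite V] {φ : W → V} (hφ : Injective φ) (w : W) :
    degN (G.comap φ) w ≤ degN G (φ w) :=
  Nat.card_le_card_of_injective (fun u => ⟨φ u, u.2⟩)
    fun _ _ h => Subtype.ext (hφ (congrArg Subtype.val h))

theorem degN_induce_compl_sup_edge_le [Finite V] {v : V}
    {x y : ({v}ᶜ : Set V)} (hx : G.Adj v x) (hy : G.Adj v y) (w : ({v}ᶜ : Set V)) :
    degN (G.induce {v}ᶜ ⊔ edge x y) w ≤ degN G w := by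
  classical
  have hwv : ∀ b, (G.induce {v}ᶜ ⊔ edge x y).Adj w b → ¬ G.Adj w b → G.Adj w v := by
    intro b hb hGb
    rcases hb with hb | hb
    · exact absurd hb hGb
    · rcases (edge_adj _ _ _ _).1 hb with ⟨⟨rfl, -⟩ | ⟨rfl, -⟩, -⟩
      exacts [hx.symm, hy.symm]
  -- the new neighbour of `x` or `y` takes the place of `v`
  refine Nat.card_le_card_of_injective
    (fun b => if h : G.Adj w b.1 then ⟨b.1, h⟩ else ⟨v, hwv b.1 b.2 h⟩) ?_
  rintro ⟨b, hb⟩ ⟨b', hb'⟩ hbb'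
  by_cases h : G.Adj w b <;> by_cases h' : G.Adj w b' <;>
    simp only [h, h', dite_true, dite_false, Subtype.mk.injEq] at hbb'
  · exact Subtype.ext (Subtype.ext hbb')
  · exact absurd hbb' b.2
  · exact absurd hbb'.symm b'.2
  · rcases hb with hb | hb
    · exact absurd hb h
    rcases hb' with hb' | hb'
    · exact absurd hb' h'
    rw [edge_adj] at hb hb'
    grind

end Degree

section Concat

variable {E : Type*}

noncomputable def arcConcat (a b : ℝ → E) (t : ℝ) : E :=
  if t ≤ 1 / 2 then a (2 * t) else b (2 * t - 1)

variable {a b : ℝ → E} {t : ℝ}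

theorem arcConcat_of_le (ht : t ≤ 1 / 2) : arcConcat a b t = a (2 * t) := if_pos ht

theorem arcConcat_of_lt (ht : 1 / 2 < t) : arcConcat a b t = b (2 * t - 1) :=
  if_neg (not_le.2 ht)

theorem arcConcat_zero : arcConcat a b 0 = a 0 := by norm_num [arcConcat]

theorem arcConcat_one : arcConcat a b 1 = b 1 := by norm_num [arcConcat]

theorem continuous_arcConcat [TopologicalSpace E] (ha : Continuous a) (hb : Continuous b)
    (hab : a 1 = b 0) : Continuous (arcConcat a b) :=
  Continuous.if_le (ha.comp (continuous_const.mul continuous_id))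
    (hb.comp ((continuous_const.mul continuous_id).sub continuous_const))
    continuous_id continuous_const fun t ht => by norm_num [ht, hab]

theorem image_arcConcat_Ioo_subset :
    arcConcat a b '' Ioo 0 1 ⊆ a '' Ioc 0 1 ∪ b '' Ioo 0 1 := by
  rintro _ ⟨t, ⟨ht0, ht1⟩, rfl⟩
  rcases le_or_gt t (1 / 2) with ht | ht
  · exact .inl ⟨2 * t, ⟨by linarith, by linarith⟩, (arcConcat_of_le ht).symm⟩
  · exact .inr ⟨2 * t - 1, ⟨by linarith, by linarith⟩, (arcConcat_of_lt ht).symm⟩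

theorem injOn_arcConcat (ha : InjOn a (Icc 0 1)) (hb : InjOn b (Icc 0 1))
    (hab : ∀ s ∈ Icc (0 : ℝ) 1, ∀ t ∈ Ioc (0 : ℝ) 1, a s ≠ b t) :
    InjOn (arcConcat a b) (Icc 0 1) := by
  have key : ∀ s ∈ Icc (0 : ℝ) 1, ∀ t ∈ Icc (0 : ℝ) 1, s ≤ 1 / 2 → 1 / 2 < t →
      arcConcat a b s ≠ arcConcat a b t := fun s ⟨hs0, _⟩ t ⟨_, ht1⟩ hs ht => by
    rw [arcConcat_of_le hs, arcConcat_of_lt ht]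
    exact hab (2 * s) ⟨by linarith, by linarith⟩ (2 * t - 1) ⟨by linarith, by linarith⟩
  rintro s ⟨hs0, hs1⟩ t ⟨ht0, ht1⟩ hst
  rcases le_or_gt s (1 / 2) with hs' | hs' <;> rcases le_or_gt t (1 / 2) with ht' | ht'
  · rw [arcConcat_of_le hs', arcConcat_of_le ht'] at hst
    have := ha ⟨by linarith, by linarith⟩ ⟨by linarith, by linarith⟩ hst
    linarith
  · exact absurd hst (key s ⟨hs0, hs1⟩ t ⟨ht0, ht1⟩ hs' ht')
  · exact absurd hst.symm (key t ⟨ht0, ht1⟩ s ⟨hs0, hs1⟩ ht' hs')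
  · rw [arcConcat_of_lt hs', arcConcat_of_lt ht'] at hst
    have := hb ⟨by linarith, by linarith⟩ ⟨by linarith, by linarith⟩ hst
    linarith

end Concat

section Drawing

variable {V W : Type*}

def IsEdgeArc (pos : V → ℝ × ℝ) (γ : ℝ → ℝ × ℝ) (u v : V) : Prop :=
  Continuous γ ∧ γ 0 = pos u ∧ γ 1 = pos v ∧ InjOn γ (Icc 0 1) ∧ ∀ w, pos w ∉ γ '' Ioo 0 1

-- `IsPlanar G` unfolds to `∃ pos arc, IsDrawing G pos arc`.
def IsDrawing (G : SimpleGraph V) (pos : V → ℝ × ℝ) (arc : V → V → ℝ → ℝ × ℝ) : Prop :=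
  Injective pos ∧ (∀ u v, G.Adj u v → IsEdgeArc pos (arc u v) u v) ∧
    ∀ u v x y, G.Adj u v → G.Adj x y → s(u, v) ≠ s(x, y) →
      Disjoint (arc u v '' Ioo 0 1) (arc x y '' Ioo 0 1)

theorem image_reverse_Ioo (γ : ℝ → ℝ × ℝ) : (fun t => γ (1 - t)) '' Ioo 0 1 = γ '' Ioo 0 1 := by
  rw [show (fun t => γ (1 - t)) = γ ∘ (1 - ·) from rfl, image_comp, image_const_sub_Ioo]
  norm_num

theorem IsEdgeArc.reverse {pos : V → ℝ × ℝ} {γ : ℝ → ℝ × ℝ} {u v : V}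
    (h : IsEdgeArc pos γ u v) : IsEdgeArc pos (fun t => γ (1 - t)) v u := by
  obtain ⟨hc, h0, h1, hinj, hw⟩ := h
  refine ⟨hc.comp (continuous_const.sub continuous_id), by simpa using h1, by simpa using h0,
    ?_, by rwa [image_reverse_Ioo]⟩
  rintro s ⟨hs0, hs1⟩ t ⟨ht0, ht1⟩ hst
  have := hinj ⟨by linarith, by linarith⟩ ⟨by linarith, by linarith⟩ hst
  linarith

theorem IsDrawing.comap {G : SimpleGraph V} {pos : V → ℝ × ℝ} {arc : V → V → ℝ → ℝ × ℝ}
    (h : IsDrawing G pos arc) {φ : W → V} (hφ : Injective φ) :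
    IsDrawing (G.comap φ) (pos ∘ φ) fun a b => arc (φ a) (φ b) := by
  obtain ⟨hpos, harc, hdisj⟩ := h
  refine ⟨hpos.comp hφ, fun u v huv => ?_, fun u v x y huv hxy hne => ?_⟩
  · obtain ⟨hc, h0, h1, hinj, hw⟩ := harc _ _ huv
    exact ⟨hc, h0, h1, hinj, fun w => hw (φ w)⟩
  · refine hdisj _ _ _ _ huv hxy fun h => hne ?_
    rw [← Sym2.map_mk, ← Sym2.map_mk] at h
    exact Sym2.map.injective hφ h

theorem IsPlanar.comap {G : SimpleGraph V} (h : IsPlanar G) {φ : W → V} (hφ : Injective φ) :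
    IsPlanar (G.comap φ) := by
  obtain ⟨pos, arc, hD⟩ : ∃ pos arc, IsDrawing G pos arc := h
  exact ⟨_, _, hD.comap hφ⟩

theorem IsDrawing.isPlanar_sup_edge {G : SimpleGraph V} {pos : V → ℝ × ℝ}
    {arc : V → V → ℝ → ℝ × ℝ} (h : IsDrawing G pos arc) {x y : V} {γ : ℝ → ℝ × ℝ}
    (hγ : IsEdgeArc pos γ x y)
    (hγG : ∀ u v, G.Adj u v → Disjoint (γ '' Ioo 0 1) (arc u v '' Ioo 0 1)) :
    IsPlanar (G ⊔ edge x y) := by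
  classical
  obtain ⟨hpos, harc, hdisj⟩ := h
  have hxy : x ≠ y := fun hxy => by
    have := hγ.2.2.2.1 (left_mem_Icc.2 zero_le_one) (right_mem_Icc.2 zero_le_one)
      (by rw [hγ.2.1, hγ.2.2.1, hxy])
    norm_num at this
  let arc' : V → V → ℝ → ℝ × ℝ := fun u v =>
    if s(u, v) = s(x, y) then (if u = x then γ else fun t => γ (1 - t)) else arc u v
  have hcases : ∀ u v, (G ⊔ edge x y).Adj u v →
      (s(u, v) = s(x, y) ∧ IsEdgeArc pos (arc' u v) u v ∧ arc' u v '' Ioo 0 1 = γ '' Ioo 0 1) ∨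
      (G.Adj u v ∧ s(u, v) ≠ s(x, y) ∧ arc' u v = arc u v) := by
    intro u v huv
    by_cases he : s(u, v) = s(x, y)
    · refine .inl ⟨he, ?_⟩
      rcases Sym2.eq_iff.1 he with ⟨rfl, rfl⟩ | ⟨rfl, rfl⟩
      · simpa [arc'] using hγ
      · simpa [arc', hxy.symm, image_reverse_Ioo] using hγ.reverse
    · refine .inr ⟨?_, he, if_neg he⟩
      rcases huv with huv | huv
      · exact huv
      · exact absurd (by rcases (edge_adj _ _ _ _).1 huv with ⟨⟨rfl, rfl⟩ | ⟨rfl, rfl⟩, -⟩ <;>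
          simp) he
  refine ⟨pos, arc', hpos, fun u v huv => ?_, fun u v u' v' huv hu'v' hne => ?_⟩
  · rcases hcases u v huv with ⟨-, h, -⟩ | ⟨huv, -, heq⟩
    · exact h
    · exact heq ▸ harc u v huv
  · rcases hcases u v huv with ⟨he, -, him⟩ | ⟨huv, he, heq⟩ <;>
      rcases hcases u' v' hu'v' with ⟨he', -, him'⟩ | ⟨hu'v', he', heq'⟩
    · exact absurd (he.trans he'.symm) hne
    · rw [him, heq']; exact hγG _ _ hu'v'
    · rw [heq, him']; exact (hγG _ _ huv).symm
    · rw [heq, heq']; exact hdisj _ _ _ _ huv hu'v' hne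

theorem IsEdgeArc.eq_or_mem_image {pos : V → ℝ × ℝ} {γ : ℝ → ℝ × ℝ} {u v : V}
    (h : IsEdgeArc pos γ u v) {s : ℝ} (hs : s ∈ Icc 0 1) :
    γ s = pos u ∨ γ s = pos v ∨ γ s ∈ γ '' Ioo 0 1 := by
  rcases hs.1.eq_or_lt with rfl | hs0
  · exact .inl h.2.1
  rcases hs.2.eq_or_lt with rfl | hs1
  · exact .inr (.inl h.2.2.1)
  · exact .inr (.inr ⟨s, ⟨hs0, hs1⟩, rfl⟩)

theorem IsDrawing.isEdgeArc_arcConcat {G : SimpleGraph V} {pos : V → ℝ × ℝ}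
    {arc : V → V → ℝ → ℝ × ℝ} (hD : IsDrawing G pos arc) {v : V} {x y : ({v}ᶜ : Set V)}
    (hx : G.Adj v x) (hy : G.Adj v y) (hxy : x ≠ y) :
    IsEdgeArc (pos ∘ Subtype.val) (arcConcat (arc x v) (arc v y)) x y := by
  obtain ⟨hpos, harc, hdisj⟩ := hD
  have hxy' : (x : V) ≠ y := fun h => hxy (Subtype.ext h)
  have ha : IsEdgeArc pos (arc x v) x v := harc x v hx.symm
  have hb : IsEdgeArc pos (arc v y) v y := harc v y hy
  have hab : Disjoint (arc x v '' Ioo 0 1) (arc v y '' Ioo 0 1) :=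
    hdisj _ _ _ _ hx.symm hy (by simp [hx.ne', hxy'])
  refine ⟨continuous_arcConcat ha.1 hb.1 (ha.2.2.1.trans hb.2.1.symm), arcConcat_zero.trans ha.2.1,
    arcConcat_one.trans hb.2.2.1, injOn_arcConcat ha.2.2.2.1 hb.2.2.2.1 ?_, fun w hw => ?_⟩
  · rintro s hs t ⟨ht0, ht1⟩ hst
    have hbt : arc v y t = pos y ∨ arc v y t ∈ arc v y '' Ioo 0 1 := by
      rcases ht1.eq_or_lt with rfl | ht1
      · exact .inl hb.2.2.1
      · exact .inr ⟨t, ⟨ht0, ht1⟩, rfl⟩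
    rcases ha.eq_or_mem_image hs with has | has | has <;> rcases hbt with hbt | hbt
    · exact hxy' (hpos (has.symm.trans (hst.trans hbt)))
    · exact hb.2.2.2.2 x (by rwa [← hst, has] at hbt)
    · exact hy.ne (hpos (has.symm.trans (hst.trans hbt)))
    · exact hb.2.2.2.2 v (by rwa [← hst, has] at hbt)
    · exact ha.2.2.2.2 y (by rwa [hst, hbt] at has)
    · exact hab.ne_of_mem has hbt hst
  · rcases image_arcConcat_Ioo_subset (a := arc x v) (b := arc v y) hw with
      ⟨s, ⟨hs0, hs1⟩, hsw⟩ | hw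
    · rcases hs1.eq_or_lt with rfl | hs1
      · exact w.2 (hpos (hsw.symm.trans ha.2.2.1))
      · exact ha.2.2.2.2 w ⟨s, ⟨hs0, hs1⟩, hsw⟩
    · exact hb.2.2.2.2 w hw

theorem IsDrawing.disjoint_arcConcat {G : SimpleGraph V} {pos : V → ℝ × ℝ}
    {arc : V → V → ℝ → ℝ × ℝ} (hD : IsDrawing G pos arc) {v x y p q : V} (hx : G.Adj v x)
    (hy : G.Adj v y) (hp : p ≠ v) (hq : q ≠ v) (hpq : G.Adj p q) :
    Disjoint (arcConcat (arc x v) (arc v y) '' Ioo 0 1) (arc p q '' Ioo 0 1) := by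
  obtain ⟨-, harc, hdisj⟩ := hD
  have hv : ∀ z, s(z, v) ≠ s(p, q) ∧ s(v, z) ≠ s(p, q) := fun z => by
    constructor <;> intro h <;> rcases Sym2.eq_iff.1 h with ⟨h1, h2⟩ | ⟨h1, h2⟩
    exacts [hq h2.symm, hp h2.symm, hp h1.symm, hq h1.symm]
  refine disjoint_of_subset_left image_arcConcat_Ioo_subset (disjoint_union_left.2 ⟨?_, ?_⟩)
  · refine disjoint_left.2 ?_
    rintro _ ⟨s, ⟨hs0, hs1⟩, rfl⟩
    rcases hs1.eq_or_lt with rfl | hs1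
    · rw [(harc x v hx.symm).2.2.1]
      exact (harc p q hpq).2.2.2.2 v
    · exact disjoint_left.1 (hdisj _ _ _ _ hx.symm hpq (hv x).1) ⟨s, ⟨hs0, hs1⟩, rfl⟩
  · exact hdisj _ _ _ _ hy hpq (hv y).2

theorem IsPlanar.induce_compl_sup_edge {G : SimpleGraph V} (hG : IsPlanar G)
    {v : V} {x y : ({v}ᶜ : Set V)} (hx : G.Adj v x) (hy : G.Adj v y) (hxy : x ≠ y) :
    IsPlanar (G.induce {v}ᶜ ⊔ edge x y) := by
  obtain ⟨pos, arc, hD⟩ : ∃ pos arc, IsDrawing G pos arc := hG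
  exact (hD.comap Subtype.val_injective).isPlanar_sup_edge (hD.isEdgeArc_arcConcat hx hy hxy)
    fun p q hpq => hD.disjoint_arcConcat hx hy p.2 q.2 hpq

end Drawing

namespace MinimalCex6

variable {V W : Type*} {G : SimpleGraph V} [Fintype V] (hmin : MinimalCex6 G)
include hmin

theorem square_colorable [Fintype W] {H : SimpleGraph W} (hH : IsPlanar H)
    (hdeg : ∀ w, degN H w ≤ 6) (hcard : Fintype.card W < Fintype.card V) :
    H.square.Colorable 21 := by
  let ψ := (Fintype.equivFin W).symm
  have h := hmin.2.2.2 _ (H.comap ψ) (hH.comap ψ.injective)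
    (fun i => (degN_comap_le ψ.injective i).trans (hdeg _)) (.inl (by simpa using hcard))
  rw [chi2, ← Nat.cast_ofNat, chromaticNumber_le_iff_colorable] at h
  exact h.of_hom ((Iso.comap ψ H).symm.toHom.square (Iso.comap ψ H).symm.injective)

theorem false_of_reducible {v : V} {H : SimpleGraph ({v}ᶜ : Set V)}
    (hH : IsPlanar H) (hdeg : ∀ w, degN H w ≤ 6) (hsq : G.square.induce {v}ᶜ ≤ H.square)
    (hv : Nat.card (G.square.neighborSet v) ≤ 20) : False := by
  classical
  have hH21 := hmin.square_colorable hH hdeg (Fintype.card_subtype_lt (x := v) (by simp))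
  have hG21 := (hH21.mono_left hsq).of_induce_compl_singleton (by omega)
  have := hG21.chromaticNumber_le
  rw [Nat.cast_ofNat] at this
  exact hmin.2.2.1.not_ge this

end MinimalCex6

namespace PlaneEmbedding

variable {V : Type*} {G : SimpleGraph V} (e : PlaneEmbedding G)

theorem fst_rot (d : G.Dart) : (e.rot d).fst = d.fst :=
  ((e.same_vertex _ _).1 (Equiv.Perm.sameCycle_apply_right.2 (.refl _ _))).symm

theorem fst_rot_pow (d : G.Dart) (k : ℕ) : ((e.rot ^ k) d).fst = d.fst := by
  induction k with
  | zero => rfl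
  | succ k ih => rw [pow_succ', Equiv.Perm.mul_apply, fst_rot, ih]

section Finite

variable [Fintype V] [DecidableEq V] [DecidableRel G.Adj]

theorem isCycleOn_rot (d : G.Dart) :
    e.rot.IsCycleOn (({d' | d'.fst = d.fst} : Finset G.Dart) : Set G.Dart) := by
  convert e.rot.isCycleOn_sameCycle d using 1
  ext d'
  simp [e.same_vertex, eq_comm]

theorem rot_pow_apply_eq_rot_pow_apply_iff (d : G.Dart) {i j : ℕ} :
    (e.rot ^ i) d = (e.rot ^ j) d ↔ i ≡ j [MOD G.degree d.fst] := by
  rw [(e.isCycleOn_rot d).pow_apply_eq_pow_apply (by simp), dart_fst_fiber_card_eq_degree]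

end Finite

def rotNeighbor (d : G.Dart) (k : ℕ) : V := ((e.rot ^ k) d).snd

variable {e}

theorem rotNeighbor_zero (d : G.Dart) : e.rotNeighbor d 0 = d.snd := by
  simp [rotNeighbor]

theorem adj_rotNeighbor (d : G.Dart) (k : ℕ) : G.Adj d.fst (e.rotNeighbor d k) :=
  e.fst_rot_pow d k ▸ ((e.rot ^ k) d).adj

section Finite

variable [Fintype V] [DecidableEq V] [DecidableRel G.Adj]

theorem rotNeighbor_eq_rotNeighbor_iff {d : G.Dart} {i j : ℕ} :
    e.rotNeighbor d i = e.rotNeighbor d j ↔ i ≡ j [MOD G.degree d.fst] := by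
  rw [← e.rot_pow_apply_eq_rot_pow_apply_iff]
  refine ⟨fun h => (Dart.ext_iff _ _).2 (Prod.ext ?_ h), fun h => congrArg (·.snd) h⟩
  rw [e.fst_rot_pow, e.fst_rot_pow]

theorem periodic_rotNeighbor (d : G.Dart) : Periodic (e.rotNeighbor d) (G.degree d.fst) :=
  fun _ => rotNeighbor_eq_rotNeighbor_iff.2 Nat.add_modEq_right

theorem exists_rotNeighbor_eq {d : G.Dart} {y : V} (hy : G.Adj d.fst y) :
    ∃ k, e.rotNeighbor d k = y := by
  obtain ⟨k, -, hk⟩ :=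
    (e.isCycleOn_rot d).exists_pow_eq (a := d) (b := ⟨(d.fst, y), hy⟩) (by simp) (by simp)
  exact ⟨k, by rw [rotNeighbor, hk]⟩

theorem faceDeg_mk (d : G.Dart) :
    e.faceDeg (Quotient.mk _ d) = #({d' | e.facePerm.SameCycle d d'} : Finset G.Dart) := by
  have hface : ∀ d', Quotient.mk e.faceSetoid d' = Quotient.mk _ d ↔ e.facePerm.SameCycle d d' :=
    fun _ => Quotient.eq.trans ⟨.symm, .symm⟩
  show Nat.card {d' // _} = _
  simp_rw [hface]
  rw [Nat.card_eq_fintype_card, Fintype.card_subtype]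

-- A triangular face through `d` is traced `d, (d.snd, w), (w, d.fst)`, where `(d.fst, w)` is the
-- dart preceding `d` in the rotation at `d.fst`.
theorem adj_snd_rot_inv_snd {d : G.Dart} (h : e.faceDeg (Quotient.mk _ d) = 3) :
    G.Adj d.snd (e.rot⁻¹ d).snd := by
  have hcycle : e.facePerm.IsCycleOn
      (({d' | e.facePerm.SameCycle d d'} : Finset G.Dart) : Set G.Dart) := by
    simpa using e.facePerm.isCycleOn_sameCycle d
  have h3 := hcycle.pow_card_apply (Finset.mem_filter.2 ⟨Finset.mem_univ _, .refl _ _⟩)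
  rw [← faceDeg_mk, h, pow_succ, pow_two, Equiv.Perm.mul_apply, Equiv.Perm.mul_apply] at h3
  have hF : ∀ d' : G.Dart, e.facePerm d' = e.rot d'.symm := fun _ => rfl
  have h₂ : (e.facePerm (e.facePerm d)).symm = e.rot⁻¹ d := by
    rw [Equiv.Perm.eq_inv_iff_eq, ← hF, h3]
  have h₁ : (e.facePerm d).fst = d.snd := by
    rw [hF, fst_rot, Dart.symm_toProd, Prod.fst_swap]
  have h₁' : (e.facePerm d).snd = (e.rot⁻¹ d).snd := by
    rw [← h₂, hF (e.facePerm d), Dart.symm_toProd, Prod.snd_swap, fst_rot, Dart.symm_toProd,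
      Prod.fst_swap]
  exact h₁ ▸ h₁' ▸ (e.facePerm d).adj

theorem adj_rotNeighbor_succ {d : G.Dart} {k : ℕ}
    (h : e.faceDeg (Quotient.mk _ ((e.rot ^ (k + 1)) d)) = 3) :
    G.Adj (e.rotNeighbor d k) (e.rotNeighbor d (k + 1)) := by
  have := adj_snd_rot_inv_snd h
  rw [pow_succ', Equiv.Perm.mul_apply, Equiv.Perm.coe_inv, Equiv.symm_apply_apply] at this
  simpa only [rotNeighbor, pow_succ', Equiv.Perm.mul_apply] using this.symm

theorem Triangulated.adj_rotNeighbor_succ {d : G.Dart} (h : e.Triangulated d.fst) (k : ℕ) :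
    G.Adj (e.rotNeighbor d k) (e.rotNeighbor d (k + 1)) :=
  PlaneEmbedding.adj_rotNeighbor_succ (h _ ⟨_, e.fst_rot_pow d (k + 1), rfl⟩)

theorem square_induce_le_of_rotNeighbor (d : G.Dart) {H : SimpleGraph ({d.fst}ᶜ : Set V)}
    (hGH : G.induce {d.fst}ᶜ ≤ H) (hdeg : G.degree d.fst ≤ 5)
    (hadj : ∀ k < G.degree d.fst, H.Adj ⟨e.rotNeighbor d k, (adj_rotNeighbor d k).ne'⟩
      ⟨e.rotNeighbor d (k + 1), (adj_rotNeighbor d (k + 1)).ne'⟩) :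
    G.square.induce {d.fst}ᶜ ≤ H.square :=
  square_induce_le_of_periodic hGH ((G.degree_pos_iff_exists_adj _).2 ⟨_, d.adj⟩) hdeg
    (fun k => Subtype.ext (periodic_rotNeighbor d k)) hadj
    fun _ hx => (exists_rotNeighbor_eq hx).imp fun _ h => Subtype.ext h

theorem square_induce_le_of_triangulated {v : V} (h5 : G.degree v = 5) (htri : e.Triangulated v) :
    G.square.induce {v}ᶜ ≤ (G.induce {v}ᶜ).square := by
  obtain ⟨u, hu⟩ := (G.degree_pos_iff_exists_adj v).1 (by omega)
  exact square_induce_le_of_rotNeighbor (e := e) ⟨(v, u), hu⟩ le_rfl h5.le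
    fun k _ => htri.adj_rotNeighbor_succ k

theorem two_le_card_neighborFinset_inter_of_triangulated {v u : V} (h5 : G.degree v = 5)
    (htri : e.Triangulated v) (hu : G.Adj v u) :
    2 ≤ #(G.neighborFinset u ∩ G.neighborFinset v) := by
  let d : G.Dart := ⟨(v, u), hu⟩
  have h₁ : G.Adj u (e.rotNeighbor d 1) := by
    simpa only [rotNeighbor_zero] using htri.adj_rotNeighbor_succ (d := d) 0
  have h₄ : G.Adj (e.rotNeighbor d 4) u := by
    have h := htri.adj_rotNeighbor_succ (d := d) 4
    rwa [rotNeighbor_eq_rotNeighbor_iff.2 (by rw [show d.fst = v from rfl, h5]; rfl :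
      4 + 1 ≡ 0 [MOD G.degree d.fst]), rotNeighbor_zero] at h
  have hne : e.rotNeighbor d 1 ≠ e.rotNeighbor d 4 := by
    rw [Ne, rotNeighbor_eq_rotNeighbor_iff, show d.fst = v from rfl, h5]
    decide
  have hv₁ : G.Adj v (e.rotNeighbor d 1) := adj_rotNeighbor d 1
  have hv₄ : G.Adj v (e.rotNeighbor d 4) := adj_rotNeighbor d 4
  exact Finset.one_lt_card.2 ⟨_, by simp [h₁, hv₁], _, by simp [h₄.symm, hv₄], hne⟩

theorem exists_dart_rotNeighbor_path {v : V} (h4 : G.degree v = 4) {f₁ f₂ f₃ : e.Faces}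
    (h₁₂ : f₁ ≠ f₂) (h₁₃ : f₁ ≠ f₃) (h₂₃ : f₂ ≠ f₃)
    (hf₁ : e.faceDeg f₁ = 3) (hf₂ : e.faceDeg f₂ = 3) (hf₃ : e.faceDeg f₃ = 3)
    (hv₁ : e.VertexOnFace v f₁) (hv₂ : e.VertexOnFace v f₂) (hv₃ : e.VertexOnFace v f₃) :
    ∃ d : G.Dart, d.fst = v ∧ ∀ k < 3, G.Adj (e.rotNeighbor d k) (e.rotNeighbor d (k + 1)) := by
  obtain ⟨d₁, hd₁, rfl⟩ := hv₁
  obtain ⟨d₂, hd₂, rfl⟩ := hv₂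
  obtain ⟨d₃, hd₃, rfl⟩ := hv₃
  set D : Finset G.Dart := {d | d.fst = v}
  set T : Finset G.Dart := {d₁, d₂, d₃}
  have hTD : T ⊆ D := by simp [T, D, Finset.insert_subset_iff, hd₁, hd₂, hd₃]
  have hT : #T = 3 := Finset.card_eq_three.2 ⟨_, _, _, fun h => h₁₂ (congrArg _ h),
    fun h => h₁₃ (congrArg _ h), fun h => h₂₃ (congrArg _ h), rfl⟩
  -- the fourth dart at `v` is the only one that may lie on a non-triangular face
  obtain ⟨b, hb⟩ := Finset.card_eq_one.1 (by
    rw [Finset.card_sdiff_of_subset hTD, dart_fst_fiber_card_eq_degree, h4, hT] : #(D \ T) = 1)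
  have hbD : b ∈ D \ T := hb ▸ Finset.mem_singleton_self b
  have hbv : b.fst = v := (Finset.mem_filter.1 (Finset.mem_sdiff.1 hbD).1).2
  refine ⟨b, hbv, fun k hk => adj_rotNeighbor_succ ?_⟩
  have hne : (e.rot ^ (k + 1)) b ≠ b := fun h => by
    have := (e.rot_pow_apply_eq_rot_pow_apply_iff b (j := 0)).1 (by simpa using h)
    rw [hbv, h4, Nat.ModEq] at this
    omega
  have hmem : (e.rot ^ (k + 1)) b ∈ T := by
    by_contra hT'
    have : (e.rot ^ (k + 1)) b ∈ D \ T := Finset.mem_sdiff.2 ⟨by simp [D, fst_rot_pow, hbv], hT'⟩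
    exact hne (Finset.mem_singleton.1 (hb ▸ this))
  simp only [T, Finset.mem_insert, Finset.mem_singleton] at hmem
  rcases hmem with h | h | h <;> rwa [h]

theorem one_le_card_neighborFinset_inter_of_rotNeighbor_path {d : G.Dart}
    (h4 : G.degree d.fst = 4)
    (hpath : ∀ k < 3, G.Adj (e.rotNeighbor d k) (e.rotNeighbor d (k + 1))) {u : V}
    (hu : G.Adj d.fst u) : 1 ≤ #(G.neighborFinset u ∩ G.neighborFinset d.fst) := by
  obtain ⟨k, rfl⟩ := exists_rotNeighbor_eq (e := e) hu
  rw [← (periodic_rotNeighbor d).map_mod_nat, h4]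
  have hk : k % 4 < 4 := Nat.mod_lt _ (by norm_num)
  obtain ⟨w, hw, hwv⟩ : ∃ w, G.Adj (e.rotNeighbor d (k % 4)) w ∧ G.Adj d.fst w := by
    by_cases hk3 : k % 4 < 3
    · exact ⟨_, hpath _ hk3, adj_rotNeighbor d _⟩
    · rw [show k % 4 = 2 + 1 by omega]
      exact ⟨_, (hpath 2 (by norm_num)).symm, adj_rotNeighbor d _⟩
  exact Finset.card_pos.2 ⟨w, by simp [hw, hwv]⟩

end Finite

end PlaneEmbedding

namespace MinimalCex6

variable {V : Type*} [Fintype V] {G : SimpleGraph V} [DecidableRel G.Adj]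
  (hmin : MinimalCex6 G)
include hmin

open PlaneEmbedding

theorem degree_le (u : V) : G.degree u ≤ 6 := by
  rw [← degN_eq_degree]
  exact hmin.2.1 u

variable [DecidableEq V]

theorem not_triangulated (e : PlaneEmbedding G) {v : V} (h5 : degN G v = 5) :
    ¬ e.Triangulated v := by
  intro htri
  rw [degN_eq_degree] at h5
  refine hmin.false_of_reducible (hmin.1.comap Subtype.val_injective)
    (fun w => (degN_comap_le Subtype.val_injective w).trans (hmin.2.1 _))
    (square_induce_le_of_triangulated h5 htri) ?_
  calc Nat.card (G.square.neighborSet v) ≤ G.degree v * (6 - 2) :=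
        card_square_neighborSet_le hmin.degree_le fun u hu =>
          two_le_card_neighborFinset_inter_of_triangulated h5 htri
            ((G.mem_neighborFinset _ _).1 hu)
    _ = 20 := by rw [h5]

theorem false_of_three_triangular_faces (e : PlaneEmbedding G) {v : V} (h4 : degN G v = 4)
    {f₁ f₂ f₃ : e.Faces} (h₁₂ : f₁ ≠ f₂) (h₁₃ : f₁ ≠ f₃) (h₂₃ : f₂ ≠ f₃)
    (hf₁ : e.faceDeg f₁ = 3) (hf₂ : e.faceDeg f₂ = 3) (hf₃ : e.faceDeg f₃ = 3)
    (hv₁ : e.VertexOnFace v f₁) (hv₂ : e.VertexOnFace v f₂) (hv₃ : e.VertexOnFace v f₃) :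
    False := by
  rw [degN_eq_degree] at h4
  obtain ⟨d, rfl, hpath⟩ :=
    exists_dart_rotNeighbor_path h4 h₁₂ h₁₃ h₂₃ hf₁ hf₂ hf₃ hv₁ hv₂ hv₃
  let x : ℕ → ({d.fst}ᶜ : Set V) := fun k => ⟨e.rotNeighbor d k, (adj_rotNeighbor d k).ne'⟩
  have hx₄ : x 4 = x 0 := Subtype.ext (rotNeighbor_eq_rotNeighbor_iff.2 (by rw [h4]; rfl))
  have hx₀₃ : x 0 ≠ x 3 := fun h => by
    have := rotNeighbor_eq_rotNeighbor_iff.1 (congrArg Subtype.val h)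
    rw [h4, Nat.ModEq] at this
    omega
  refine hmin.false_of_reducible (H := G.induce {d.fst}ᶜ ⊔ edge (x 0) (x 3))
    (hmin.1.induce_compl_sup_edge (adj_rotNeighbor d 0) (adj_rotNeighbor d 3) hx₀₃)
    (fun w => (degN_induce_compl_sup_edge_le (adj_rotNeighbor d 0) (adj_rotNeighbor d 3) w).trans
      (hmin.2.1 _))
    (square_induce_le_of_rotNeighbor (e := e) d le_sup_left (by omega) fun k hk => ?_) ?_
  · obtain hk | rfl : k < 3 ∨ k = 3 := by omega
    · exact Or.inl (hpath k hk)
    · exact Or.inr ((edge_adj _ _ _ _).2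
        ⟨.inr ⟨rfl, hx₄⟩, fun h => hx₀₃ (h.trans hx₄).symm⟩)
  · calc Nat.card (G.square.neighborSet d.fst) ≤ G.degree d.fst * (6 - 1) :=
          card_square_neighborSet_le hmin.degree_le fun u hu =>
            one_le_card_neighborFinset_inter_of_rotNeighbor_path h4 hpath
              ((G.mem_neighborFinset _ _).1 hu)
      _ = 20 := by rw [h4]

end MinimalCex6

theorem stmt17_general {V : Type*} [Fintype V] [DecidableEq V] (G : SimpleGraph V)
    [DecidableRel G.Adj] (hmin : MinimalCex6 G)
    (e : PlaneEmbedding G) :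
    (¬ ∃ v : V, degN G v = 5 ∧ e.Triangulated v) ∧
    (¬ ∃ (v : V) (f₁ f₂ f₃ : e.Faces), degN G v = 4 ∧
      f₁ ≠ f₂ ∧ f₁ ≠ f₃ ∧ f₂ ≠ f₃ ∧
      e.faceDeg f₁ = 3 ∧ e.faceDeg f₂ = 3 ∧ e.faceDeg f₃ = 3 ∧
      e.VertexOnFace v f₁ ∧ e.VertexOnFace v f₂ ∧ e.VertexOnFace v f₃) :=
  ⟨fun ⟨_, h5, htri⟩ => hmin.not_triangulated e h5 htri,
    fun ⟨_, _, _, _, h4, h₁₂, h₁₃, h₂₃, hf₁, hf₂, hf₃, hv₁, hv₂, hv₃⟩ =>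
      hmin.false_of_three_triangular_faces e h4 h₁₂ h₁₃ h₂₃ hf₁ hf₂ hf₃ hv₁ hv₂ hv₃⟩

/-- A minimal counterexample to the bound `χ₂ ≤ 21` for planar graphs of maximum degree
at most 6 contains neither a triangulated vertex of degree 5, nor a vertex of degree 4
incident to at least three triangular faces. -/
theorem stmt17 {V : Type*} [Fintype V] [DecidableEq V] (G : SimpleGraph V)
    [DecidableRel G.Adj] (hmin : MinimalCex6 G)
    (e : PlaneEmbedding G) (hsphere : e.IsSphere) :
    (¬ ∃ v : V, degN G v = 5 ∧ e.Triangulated v) ∧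
    (¬ ∃ (v : V) (f₁ f₂ f₃ : e.Faces), degN G v = 4 ∧
      f₁ ≠ f₂ ∧ f₁ ≠ f₃ ∧ f₂ ≠ f₃ ∧
      e.faceDeg f₁ = 3 ∧ e.faceDeg f₂ = 3 ∧ e.faceDeg f₃ = 3 ∧
      e.VertexOnFace v f₁ ∧ e.VertexOnFace v f₂ ∧ e.VertexOnFace v f₃) :=
  stmt17_general G hmin e
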